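/- (Bounded uniformity uniqueness criterion) Let γ be a partially oriented specification on Ω=E^S. Suppose there exists a constant c>0 such that for every cylinder event A (i.e. A∈ℱ_Υ for some finite Υ⊆S) there exists a time box Λ with A∈ℱ_{⌊Λ⌋} and γ_Λ(A,ω) ≥ c·γ_Λ(A,ξ) for all ω,ξ∈Ω. Then 𝒢(γ) contains at most one element. -/

import Mathlib

open MeasureTheory Filter Topology
open scoped ENNReal

namespace POCpaper

section Geometry

variable {S : Type*} [PartialOrder S]

/-- The past of a set of sites. -/
def past (Υ : Set S) : Set S := {x | x ∉ Υ ∧ ∃ y ∈ Υ, x < y}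

/-- The future of a set of sites. -/
def future (Υ : Set S) : Set S := {x | x ∉ Υ ∧ ∃ y ∈ Υ, y < x}

/-- The outer time of a set of sites: sites incomparable with every site of the set. -/
def outerT (Υ : Set S) : Set S := {x | ∀ y ∈ Υ, ¬ x ≤ y ∧ ¬ y ≤ x}

/-- Maximal elements of a set. -/
def sMax (A : Set S) : Set S := {x | x ∈ A ∧ ∀ y ∈ A, ¬ x < y}

/-- Minimal elements of a set. -/
def sMin (A : Set S) : Set S := {x | x ∈ A ∧ ∀ y ∈ A, ¬ y < x}

/-- The (strict) past of a single site. -/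
def pastPt (x : S) : Set S := {y | y < x}

/-- The (strict) future of a single site. -/
def futPt (x : S) : Set S := {y | x < y}

/-- A time box: a finite set whose past and future are disjoint. -/
def IsTimeBox (Λ : Finset S) : Prop := past (Λ : Set S) ∩ future (Λ : Set S) = ∅

/-- `⌊Λ⌋ = S ∖ Λ₊`. -/
def floorB (Λ : Finset S) : Set S := (future (Λ : Set S))ᶜ

/-- `Λ° = Λ₋ ∪ Λ*`. -/
def ringB (Λ : Finset S) : Set S := past (Λ : Set S) ∪ outerT (Λ : Set S)

/-- The nearest past `∂Λ` of a box. -/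
def nearPast (Λ : Finset S) : Set S := (⋃ x ∈ Λ, sMax (pastPt x)) \ (Λ : Set S)

/-- A slice: a (finite) set of pairwise incomparable sites. -/
def IsSliceSet (A : Set S) : Prop := A.Finite ∧ ∀ x ∈ A, ∀ y ∈ A, x ≠ y → ¬ x ≤ y

end Geometry

/-- The standing assumptions on the site space `S`. -/
structure Standing (S : Type*) [PartialOrder S] : Prop where
  finMax : ∀ x : S, (sMax (pastPt x)).Finite
  finMin : ∀ x : S, (sMin (futPt x)).Finite
  reachMax : ∀ x y : S, y < x → ∃ y₀ ∈ sMax (pastPt x), y ≤ y₀ ∧ y₀ < x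
  reachMin : ∀ x z : S, x < z → ∃ z₀ ∈ sMin (futPt x), z₀ ≤ z ∧ x < z₀
  noMinimal : ∀ x : S, ∃ y : S, y < x

/-- A function is bounded. -/
def Bounded {α : Type*} (f : α → ℝ) : Prop := ∃ C : ℝ, ∀ a, |f a| ≤ C

section Kernels

variable {S : Type*} [PartialOrder S] (E : Type*) [MeasurableSpace E]

/-- `ℱ_Υ`: the sub-σ-algebra of the product σ-algebra generated by the coordinates in `Υ`. -/
def F (Υ : Set S) : MeasurableSpace (S → E) :=
  MeasurableSpace.comap (fun ω (y : Υ) => ω y) MeasurableSpace.pi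

/-- A measure on `Ω` with the σ-algebra `ℱ_{⌊Λ⌋}`. -/
abbrev BoxMeasure (Λ : Finset S) := @Measure (S → E) (F E (floorB Λ))

/-- A proper oriented kernel on a time box `Λ`. -/
structure IsProperKernel (Λ : Finset S) (κ : (S → E) → BoxMeasure E Λ) : Prop where
  prob : ∀ ω, IsProbabilityMeasure (κ ω)
  measOuter : ∀ A : Set (S → E), MeasurableSet[F E (floorB Λ)] A →
    Measurable[F E (ringB Λ)] fun ω => κ ω A
  measPast : ∀ A : Set (S → E), MeasurableSet[F E ((Λ : Set S))] A →
    Measurable[F E (past (Λ : Set S))] fun ω => κ ω A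
  proper : ∀ B : Set (S → E), MeasurableSet[F E (ringB Λ)] B →
    ∀ ω, κ ω B = B.indicator (fun _ => (1 : ℝ≥0∞)) ω

/-- A partially oriented specification (POS). -/
structure IsPOS (γ : ∀ Λ : Finset S, (S → E) → BoxMeasure E Λ) : Prop where
  proper : ∀ Λ : Finset S, IsTimeBox Λ → IsProperKernel E Λ (γ Λ)
  consist : ∀ Λ Δ : Finset S, IsTimeBox Λ → IsTimeBox Δ → Λ ⊆ Δ →
    ∀ h : (S → E) → ℝ, Measurable[F E (floorB Λ)] h → Bounded h →
      ∀ ω : S → E, ∫ σ, (∫ ξ, h ξ ∂(γ Λ σ)) ∂(γ Δ ω) = ∫ σ, h σ ∂(γ Δ ω)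

/-- A measure consistent with a POS: a partially oriented chain (γ-POC). -/
def IsPOC (γ : ∀ Λ : Finset S, (S → E) → BoxMeasure E Λ) (μ : Measure (S → E)) : Prop :=
  IsProbabilityMeasure μ ∧
  ∀ Λ : Finset S, IsTimeBox Λ →
    ∀ h : (S → E) → ℝ, Measurable[F E (floorB Λ)] h → Bounded h →
      ∫ σ, (∫ ξ, h ξ ∂(γ Λ σ)) ∂μ = ∫ σ, h σ ∂μ

/-- The tail σ-algebra `ℱ₋∞ = ⋂_{Λ time box} ℱ_{Λ°}`. -/
def tailField : MeasurableSpace (S → E) :=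
  ⨅ (Λ : Finset S) (_ : IsTimeBox Λ), F E (ringB Λ)

/-- Extreme points of the convex set `𝒢(γ)`. -/
def IsExtremePOC (γ : ∀ Λ : Finset S, (S → E) → BoxMeasure E Λ) (μ : Measure (S → E)) : Prop :=
  IsPOC E γ μ ∧
  ∀ (t : ℝ≥0∞) (ν₁ ν₂ : Measure (S → E)), 0 < t → t < 1 →
    IsPOC E γ ν₁ → IsPOC E γ ν₂ → μ = t • ν₁ + (1 - t) • ν₂ → ν₁ = ν₂

/-- A local function: measurable with respect to finitely many coordinates. -/
def IsLocal (f : (S → E) → ℝ) : Prop := ∃ Υ : Finset S, Measurable[F E ((Υ : Set S))] f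

/-- A quasilocal function: uniform limit of bounded local functions. -/
def IsQuasilocal (f : (S → E) → ℝ) : Prop :=
  ∀ ε : ℝ, 0 < ε → ∃ g : (S → E) → ℝ, IsLocal E g ∧ Bounded g ∧ ∀ ω, |f ω - g ω| ≤ ε

/-- A local event. -/
def IsLocalEvent (A : Set (S → E)) : Prop := ∃ Υ : Finset S, MeasurableSet[F E ((Υ : Set S))] A

/-- A quasilocal POS. -/
def IsQuasilocalPOS (γ : ∀ Λ : Finset S, (S → E) → BoxMeasure E Λ) : Prop :=
  IsPOS E γ ∧ ∀ Λ : Finset S, IsTimeBox Λ → ∀ A : Set (S → E), IsLocalEvent E A →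
    MeasurableSet[F E (floorB Λ)] A → IsQuasilocal E fun ω => (γ Λ ω A).toReal

/-- A POMM: a Markovian POS, whose kernels depend on the past only through the nearest past. -/
def IsPOMM (γ : ∀ Λ : Finset S, (S → E) → BoxMeasure E Λ) : Prop :=
  IsPOS E γ ∧ ∀ Λ : Finset S, IsTimeBox Λ → ∀ A : Set (S → E),
    MeasurableSet[F E ((Λ : Set S))] A → Measurable[F E (nearPast Λ)] fun ω => γ Λ ω A

/-- Two configurations agreeing at every site except possibly `x`. -/
def agreeExcept (x : S) (ξ η : S → E) : Prop := ∀ z : S, z ≠ x → ξ z = η z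

/-- The oscillation `δ_x(f)` of `f` at the site `x`. -/
noncomputable def osc (x : S) (f : (S → E) → ℝ) : ℝ :=
  sSup {d : ℝ | ∃ ξ η : S → E, agreeExcept E x ξ η ∧ d = |f ξ - f η|}

/-- A dust-rate matrix for the POS `γ`. -/
def IsDustRate (γ : ∀ Λ : Finset S, (S → E) → BoxMeasure E Λ) (α : S → S → ℝ) : Prop :=
  (∀ ⦃x y : S⦄, x < y → 0 ≤ α y x) ∧
  ∀ y x : S, x < y → ∀ f : (S → E) → ℝ,
    Measurable[F E ({y} : Set S)] f → Bounded f →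
      osc E x (fun ω => ∫ ξ, f ξ ∂(γ {y} ω)) ≤ osc E y f * α y x

/-- The Dobrushin dust-rate matrix built from variational distances of single-site kernels. -/
noncomputable def dobMatrix (γ : ∀ Λ : Finset S, (S → E) → BoxMeasure E Λ) (y x : S) : ℝ :=
  sSup {d : ℝ | ∃ ξ η : S → E, agreeExcept E x ξ η ∧
    d = (1 / 2) * ∑' a : E,
      |((γ {y} ξ) {σ | σ y = a}).toReal - ((γ {y} η) {σ | σ y = a}).toReal|}

/-- The maximal percolation parameters `p_x^γ` of a POMM. -/
noncomputable def percParam (γ : ∀ Λ : Finset S, (S → E) → BoxMeasure E Λ) (x : S) : ℝ :=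
  sSup {d : ℝ | ∃ ξ η : S → E,
    d = (1 / 2) * ∑' a : E,
      |((γ {x} ξ) {σ | σ x = a}).toReal - ((γ {x} η) {σ | σ x = a}).toReal|}

end Kernels

section Percolation

variable {S : Type*} [PartialOrder S]

/-- An oriented (towards the past) open path from `x` to `y`. -/
def OpenPath (X : S → Bool) (x y : S) : Prop :=
  ∃ L : List S, L ≠ [] ∧ L.head? = some x ∧ L.getLast? = some y ∧
    L.Chain' (fun a b => b ∈ sMax (pastPt a)) ∧ ∀ z ∈ L, X z = true

/-- `x` lies in an infinite oriented open cluster: the event `(x → -∞)`. -/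
def ToMinusInfinity (X : S → Bool) (x : S) : Prop :=
  ∃ c : ℕ → S, StrictAnti c ∧ ∀ n, OpenPath X x (c n)

/-- `ψ` is the product Bernoulli measure with parameters `p`. -/
def IsBernoulliProduct (p : S → ℝ) (ψ : Measure (S → Bool)) : Prop :=
  IsProbabilityMeasure ψ ∧ ∀ (T : Finset S) (b : S → Bool),
    ψ {X | ∀ x ∈ T, X x = b x} = ∏ x ∈ T, ENNReal.ofReal (if b x then p x else 1 - p x)

end Percolation


section Uniqueness

open MeasurableSpace
open scoped symmDiff

variable {S : Type*} [PartialOrder S] {E : Type*} [MeasurableSpace E]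

lemma F_le_pi (Υ : Set S) : F E Υ ≤ (MeasurableSpace.pi : MeasurableSpace (S → E)) :=
  measurable_iff_comap_le.mp (measurable_pi_lambda _ fun y => measurable_pi_apply (y : S))

lemma measurableSet_of_F {Υ : Set S} {A : Set (S → E)} (h : MeasurableSet[F E Υ] A) :
    MeasurableSet A :=
  F_le_pi (E := E) Υ A h

lemma F_mono {Υ Υ' : Set S} (h : Υ ⊆ Υ') : F E Υ ≤ F E Υ' := by
  have hm : Measurable fun (g : Υ' → E) (y : Υ) => g (Set.inclusion h y) :=
    measurable_pi_lambda _ fun y => measurable_pi_apply _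
  have heq : F E Υ = MeasurableSpace.comap (fun (ω : S → E) (y : Υ') => ω y)
      (MeasurableSpace.comap (fun (g : Υ' → E) (y : Υ) => g (Set.inclusion h y))
        MeasurableSpace.pi) := by
    rw [MeasurableSpace.comap_comp]
    rfl
  rw [heq]
  exact MeasurableSpace.comap_mono (measurable_iff_comap_le.mp hm)

/-- The collection of cylinder events. -/
def Cyl (S : Type*) (E : Type*) [MeasurableSpace E] : Set (Set (S → E)) :=
  {A | ∃ Υ : Finset S, MeasurableSet[F E ((Υ : Set S))] A}

lemma isSetAlgebra_cyl : MeasureTheory.IsSetAlgebra (Cyl S E) where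
  empty_mem := ⟨∅, @MeasurableSet.empty _ (F E _)⟩
  compl_mem := fun _ hs => hs.elim fun Υ hΥ => ⟨Υ, hΥ.compl⟩
  union_mem := fun _ _ hs ht => by
    classical
    obtain ⟨Υ₁, h₁⟩ := hs
    obtain ⟨Υ₂, h₂⟩ := ht
    refine ⟨Υ₁ ∪ Υ₂, MeasurableSet.union ?_ ?_⟩
    · exact F_mono (by exact_mod_cast (Finset.subset_union_left : Υ₁ ⊆ Υ₁ ∪ Υ₂)) _ h₁
    · exact F_mono (by exact_mod_cast (Finset.subset_union_right : Υ₂ ⊆ Υ₁ ∪ Υ₂)) _ h₂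

lemma pi_eq_generateFrom_cyl :
    (MeasurableSpace.pi : MeasurableSpace (S → E)) = .generateFrom (Cyl S E) := by
  refine le_antisymm ?_ (MeasurableSpace.generateFrom_le fun A hA =>
    measurableSet_of_F (hA.choose_spec))
  show (⨆ x : S, MeasurableSpace.comap (fun ω : S → E => ω x) ‹MeasurableSpace E›) ≤ _
  refine iSup_le fun x => ?_
  intro s hs
  obtain ⟨u, hu, rfl⟩ := MeasurableSpace.measurableSet_comap.mp hs
  apply MeasurableSpace.measurableSet_generateFrom
  refine ⟨{x}, MeasurableSpace.measurableSet_comap.2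
    ⟨(fun g : (({x} : Finset S) : Set S) → E => g ⟨x, by simp⟩) ⁻¹' u,
      measurable_pi_apply _ hu, rfl⟩⟩

lemma measure_le_of_cyl (μ ν : Measure (S → E)) [IsFiniteMeasure μ] [IsFiniteMeasure ν]
    (h : ∀ A ∈ Cyl S E, ν A ≤ μ A) : ν ≤ μ := by
  have hdense : (μ + ν).MeasureDense (Cyl S E) :=
    .of_generateFrom_isSetAlgebra_finite (μ + ν) isSetAlgebra_cyl pi_eq_generateFrom_cyl
  rw [Measure.le_iff]
  intro s hs
  refine ENNReal.le_of_forall_pos_le_add fun ε hε _ => ?_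
  obtain ⟨t, ht, hst⟩ := hdense.approx s hs (measure_ne_top _ s) ((ε : ℝ) / 2)
    (by positivity)
  have hsub1 : s ⊆ t ∪ s ∆ t := by
    intro x hx
    by_cases hxt : x ∈ t
    · exact Set.mem_union_left _ hxt
    · exact Set.mem_union_right _ (by simp [Set.mem_symmDiff, hx, hxt])
  have hsub2 : t ⊆ s ∪ s ∆ t := by
    intro x hx
    by_cases hxs : x ∈ s
    · exact Set.mem_union_left _ hxs
    · exact Set.mem_union_right _ (by simp [Set.mem_symmDiff, hx, hxs])
  have hνd : ν (s ∆ t) ≤ ENNReal.ofReal ((ε : ℝ) / 2) :=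
    le_trans (le_trans (by simp [Measure.add_apply]) hst.le) le_rfl |>.trans le_rfl
  have hμd : μ (s ∆ t) ≤ ENNReal.ofReal ((ε : ℝ) / 2) :=
    le_trans (le_trans (by simp [Measure.add_apply]) hst.le) le_rfl |>.trans le_rfl
  have step1 : ν s ≤ ν t + ENNReal.ofReal ((ε : ℝ) / 2) :=
    le_trans (le_trans (measure_mono hsub1) (measure_union_le _ _)) (by gcongr)
  have step2 : ν t ≤ μ s + ENNReal.ofReal ((ε : ℝ) / 2) := by
    refine le_trans (h t ht) ?_
    exact le_trans (le_trans (measure_mono hsub2) (measure_union_le _ _)) (by gcongr)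
  calc ν s ≤ μ s + ENNReal.ofReal ((ε : ℝ) / 2) + ENNReal.ofReal ((ε : ℝ) / 2) := by
        refine le_trans step1 ?_; gcongr
    _ = μ s + ε := by
        rw [add_assoc, ← ENNReal.ofReal_add (by positivity) (by positivity), add_halves]
        simp

lemma integral_indicator_one'' {α : Type*} {m : MeasurableSpace α} (μ : @Measure α m)
    {s : Set α} (hs : MeasurableSet[m] s) :
    ∫ x, s.indicator (fun _ => (1 : ℝ)) x ∂μ = (μ s).toReal := by
  rw [integral_indicator_const (1 : ℝ) hs, smul_eq_mul, mul_one, measureReal_def]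

variable (γ : ∀ Λ : Finset S, (S → E) → BoxMeasure E Λ)

lemma poc_int {μ : Measure (S → E)} (hμ : IsPOC E γ μ)
    {Λ : Finset S} (hΛ : IsTimeBox Λ) {A : Set (S → E)}
    (hA : MeasurableSet[F E (floorB Λ)] A) :
    ∫ σ, (γ Λ σ A).toReal ∂μ = (μ A).toReal := by
  have hbdd : Bounded (A.indicator fun _ => (1 : ℝ)) :=
    ⟨1, fun a => by by_cases h : a ∈ A <;> simp [Set.indicator_apply, h]⟩
  have hmeas : Measurable[F E (floorB Λ)] (A.indicator fun _ => (1 : ℝ)) :=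
    Measurable.indicator (@measurable_const ℝ (S → E) _ (F E (floorB Λ)) 1) hA
  have key := hμ.2 Λ hΛ _ hmeas hbdd
  have inner : ∀ σ, ∫ ξ, A.indicator (fun _ => (1 : ℝ)) ξ ∂(γ Λ σ) = (γ Λ σ A).toReal := by
    intro σ
    exact integral_indicator_one'' (γ Λ σ) hA
  have outer : ∫ ξ, A.indicator (fun _ => (1 : ℝ)) ξ ∂μ = (μ A).toReal := by
    exact integral_indicator_one'' μ (measurableSet_of_F hA)
  simp only [inner] at key
  rw [key, outer]

lemma f_meas (hγ : IsPOS E γ) {Λ : Finset S} (hΛ : IsTimeBox Λ) {A : Set (S → E)}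
    (hA : MeasurableSet[F E (floorB Λ)] A) :
    Measurable fun σ => (γ Λ σ A).toReal :=
  (Measurable.mono ((hγ.proper Λ hΛ).measOuter A hA) (F_le_pi _) le_rfl).ennreal_toReal

lemma f_le_one (hγ : IsPOS E γ) {Λ : Finset S} (hΛ : IsTimeBox Λ) {A : Set (S → E)} (σ : S → E) :
    (γ Λ σ A).toReal ≤ 1 := by
  haveI := (hγ.proper Λ hΛ).prob σ
  calc (γ Λ σ A).toReal ≤ (1 : ℝ≥0∞).toReal :=
        ENNReal.toReal_mono ENNReal.one_ne_top prob_le_one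
    _ = 1 := by simp

lemma f_integrable (hγ : IsPOS E γ) {Λ : Finset S} (hΛ : IsTimeBox Λ) {A : Set (S → E)}
    (hA : MeasurableSet[F E (floorB Λ)] A) (κ : Measure (S → E)) [IsFiniteMeasure κ] :
    Integrable (fun σ => (γ Λ σ A).toReal) κ :=
  Integrable.mono' (integrable_const 1) (f_meas γ hγ hΛ hA).aestronglyMeasurable
    (Filter.Eventually.of_forall fun σ => by
      rw [Real.norm_eq_abs, abs_of_nonneg ENNReal.toReal_nonneg]
      exact f_le_one γ hγ hΛ σ)

lemma stepCore (hγ : IsPOS E γ) {c' : ℝ} (hc0 : 0 < c')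
    (hyp : ∀ A ∈ Cyl S E, ∃ Λ : Finset S, IsTimeBox Λ ∧ MeasurableSet[F E (floorB Λ)] A ∧
      ∀ ω ξ : S → E, ENNReal.ofReal c' * γ Λ ξ A ≤ γ Λ ω A)
    (μ ν : Measure (S → E)) [IsProbabilityMeasure μ] [IsProbabilityMeasure ν]
    (hμ : ∀ Λ : Finset S, IsTimeBox Λ → ∀ A : Set (S → E), MeasurableSet[F E (floorB Λ)] A →
      ∫ σ, (γ Λ σ A).toReal ∂μ = (μ A).toReal)
    (hν : ∀ Λ : Finset S, IsTimeBox Λ → ∀ A : Set (S → E), MeasurableSet[F E (floorB Λ)] A →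
      ∫ σ, (γ Λ σ A).toReal ∂ν = (ν A).toReal) :
    ∀ A ∈ Cyl S E, ENNReal.ofReal c' * ν A ≤ μ A := by
  intro A hA
  obtain ⟨Λ, hΛ, hAm, hb⟩ := hyp A hA
  set f : (S → E) → ℝ := fun σ => (γ Λ σ A).toReal with hf
  have hfμ := hμ Λ hΛ A hAm
  have hfν := hν Λ hΛ A hAm
  have hpt : ∀ ω ξ : S → E, c' * f ξ ≤ f ω := by
    intro ω ξ
    have h1 := hb ω ξ
    haveI := (hγ.proper Λ hΛ).prob ω
    have hfin : γ Λ ω A ≠ ⊤ := measure_ne_top _ _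
    have h2 := ENNReal.toReal_mono hfin h1
    rwa [ENNReal.toReal_mul, ENNReal.toReal_ofReal hc0.le] at h2
  have h1 : ∀ ξ : S → E, c' * f ξ ≤ (μ A).toReal := by
    intro ξ
    rw [← hfμ]
    calc c' * f ξ = ∫ _, c' * f ξ ∂μ := by simp
      _ ≤ ∫ σ, f σ ∂μ :=
        integral_mono (integrable_const _) (f_integrable γ hγ hΛ hAm μ) fun σ => hpt σ ξ
  have h2 : c' * (ν A).toReal ≤ (μ A).toReal := by
    rw [← hfν, ← integral_const_mul]
    have : ∫ ξ, c' * f ξ ∂ν ≤ ∫ _, (μ A).toReal ∂ν :=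
      integral_mono ((f_integrable γ hγ hΛ hAm ν).const_mul c') (integrable_const _) h1
    simpa using this
  calc ENNReal.ofReal c' * ν A = ENNReal.ofReal (c' * (ν A).toReal) := by
        rw [ENNReal.ofReal_mul hc0.le, ENNReal.ofReal_toReal (measure_ne_top _ _)]
    _ ≤ ENNReal.ofReal ((μ A).toReal) := ENNReal.ofReal_le_ofReal h2
    _ = μ A := ENNReal.ofReal_toReal (measure_ne_top _ _)

lemma step_up (hγ : IsPOS E γ) {c' : ℝ} (hc0 : 0 < c')
    (hyp : ∀ A ∈ Cyl S E, ∃ Λ : Finset S, IsTimeBox Λ ∧ MeasurableSet[F E (floorB Λ)] A ∧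
      ∀ ω ξ : S → E, ENNReal.ofReal c' * γ Λ ξ A ≤ γ Λ ω A)
    {t : ℝ} (ht0 : 0 ≤ t) (ht1 : t < 1)
    {μ ν : Measure (S → E)} (hμ : IsPOC E γ μ) (hν : IsPOC E γ ν)
    (hP : ENNReal.ofReal t • ν ≤ μ) :
    ENNReal.ofReal (t + c' * (1 - t)) • ν ≤ μ := by
  haveI := hμ.1
  haveI := hν.1
  set T := ENNReal.ofReal t with hT
  set R := ENNReal.ofReal (1 - t) with hR
  have hR0 : R ≠ 0 := (ENNReal.ofReal_pos.mpr (by linarith)).ne'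
  have hRtop : R ≠ ⊤ := ENNReal.ofReal_ne_top
  have hTtop : T ≠ ⊤ := ENNReal.ofReal_ne_top
  haveI : IsFiniteMeasure (T • ν) := ⟨by
    rw [Measure.smul_apply, smul_eq_mul, measure_univ, mul_one]
    exact ENNReal.ofReal_lt_top⟩
  set ρ : Measure (S → E) := R⁻¹ • (μ - T • ν) with hρdef
  have hrho_apply : ∀ s : Set (S → E), MeasurableSet s → ρ s = R⁻¹ * (μ s - T * ν s) := by
    intro s hs
    rw [hρdef, Measure.smul_apply, smul_eq_mul, Measure.sub_apply hs hP,
      Measure.smul_apply, smul_eq_mul]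
  have hRval : (1 : ℝ≥0∞) - T = R := by
    rw [hR, ENNReal.ofReal_sub 1 ht0, ENNReal.ofReal_one]
  haveI hρprob : IsProbabilityMeasure ρ := ⟨by
    rw [hrho_apply _ MeasurableSet.univ, measure_univ, measure_univ, mul_one, hRval]
    exact ENNReal.inv_mul_cancel hR0 hRtop⟩
  have hdecomp : μ = T • ν + R • ρ := by
    have hRρ : R • ρ = μ - T • ν := by
      rw [hρdef, smul_smul, ENNReal.mul_inv_cancel hR0 hRtop, one_smul]
    rw [hRρ, add_comm]
    exact (Measure.sub_add_cancel_of_le hP).symm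
  have hint : ∀ f : (S → E) → ℝ, Integrable f ν → Integrable f ρ →
      ∫ x, f x ∂μ = t * ∫ x, f x ∂ν + (1 - t) * ∫ x, f x ∂ρ := by
    intro f hfν hfρ
    conv_lhs => rw [hdecomp]
    rw [integral_add_measure (hfν.smul_measure hTtop) (hfρ.smul_measure hRtop),
      integral_smul_measure, integral_smul_measure, hT, hR,
      ENNReal.toReal_ofReal ht0, ENNReal.toReal_ofReal (by linarith : (0:ℝ) ≤ 1 - t),
      smul_eq_mul, smul_eq_mul]
  have hρint : ∀ Λ : Finset S, IsTimeBox Λ → ∀ A : Set (S → E),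
      MeasurableSet[F E (floorB Λ)] A →
      ∫ σ, (γ Λ σ A).toReal ∂ρ = (ρ A).toReal := by
    intro Λ hΛ A hA
    have h := hint _ (f_integrable γ hγ hΛ hA ν) (f_integrable γ hγ hΛ hA ρ)
    rw [poc_int γ hμ hΛ hA, poc_int γ hν hΛ hA] at h
    have hAm : MeasurableSet A := measurableSet_of_F hA
    have hTle : T * ν A ≤ μ A := by
      have := Measure.le_iff'.mp hP A
      rwa [Measure.smul_apply, smul_eq_mul] at this
    have hρA : (ρ A).toReal = (1 - t)⁻¹ * ((μ A).toReal - t * (ν A).toReal) := by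
      rw [hrho_apply A hAm, ENNReal.toReal_mul, ENNReal.toReal_inv,
        ENNReal.toReal_sub_of_le hTle (measure_ne_top _ _), ENNReal.toReal_mul,
        hR, ENNReal.toReal_ofReal (by linarith : (0:ℝ) ≤ 1 - t),
        hT, ENNReal.toReal_ofReal ht0]
    have htne : (1 : ℝ) - t ≠ 0 := by linarith
    rw [hρA]
    field_simp
    linarith [h]
  have hcyl := stepCore γ hγ hc0 hyp ρ ν hρint (fun Λ hΛ A hA => poc_int γ hν hΛ hA)
  haveI : IsFiniteMeasure (ENNReal.ofReal c' • ν) := ⟨by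
    rw [Measure.smul_apply, smul_eq_mul, measure_univ, mul_one]
    exact ENNReal.ofReal_lt_top⟩
  have hρν : ENNReal.ofReal c' • ν ≤ ρ := by
    refine measure_le_of_cyl ρ (ENNReal.ofReal c' • ν) fun A hA => ?_
    rw [Measure.smul_apply, smul_eq_mul]
    exact hcyl A hA
  rw [Measure.le_iff]
  intro s hs
  have h1 : ENNReal.ofReal c' * ν s ≤ ρ s := by
    have := Measure.le_iff'.mp hρν s
    rwa [Measure.smul_apply, smul_eq_mul] at this
  have hofr : ENNReal.ofReal (t + c' * (1 - t)) = T + ENNReal.ofReal c' * R := by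
    rw [ENNReal.ofReal_add ht0 (mul_nonneg hc0.le (by linarith)), ENNReal.ofReal_mul hc0.le]
  calc (ENNReal.ofReal (t + c' * (1 - t)) • ν) s
      = (T + ENNReal.ofReal c' * R) * ν s := by
        rw [Measure.smul_apply, smul_eq_mul, hofr]
    _ = T * ν s + R * (ENNReal.ofReal c' * ν s) := by ring
    _ ≤ T * ν s + R * ρ s := by gcongr
    _ = (T • ν + R • ρ) s := by
        simp only [Measure.add_apply, Measure.smul_apply, smul_eq_mul]
    _ = μ s := by rw [← hdecomp]

end Uniqueness

/-- **Bounded uniformity uniqueness criterion**: if changing the boundary condition only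
affects the kernels by a bounded multiplicative factor, there is at most one consistent
measure. -/
theorem bounded_uniformity {S : Type*} [PartialOrder S] [Countable S]
    {E : Type*} [MeasurableSpace E]
    (hS : Standing S)
    (γ : ∀ Λ : Finset S, (S → E) → BoxMeasure E Λ) (hγ : IsPOS E γ)
    (c : ℝ) (hc : 0 < c)
    (hyp : ∀ A : Set (S → E), (∃ Υ : Finset S, MeasurableSet[F E ((Υ : Set S))] A) →
      ∃ Λ : Finset S, IsTimeBox Λ ∧ MeasurableSet[F E (floorB Λ)] A ∧
        ∀ ω ξ : S → E, ENNReal.ofReal c * γ Λ ξ A ≤ γ Λ ω A) :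
    ∀ μ ν : Measure (S → E), IsPOC E γ μ → IsPOC E γ ν → μ = ν := by
  intro μ ν hμ hν
  set c' : ℝ := min c 2⁻¹ with hc'
  have hc'0 : (0 : ℝ) < c' := lt_min hc (by norm_num)
  have hc'1 : c' < 1 := lt_of_le_of_lt (min_le_right _ _) (by norm_num)
  have hyp' : ∀ A ∈ Cyl S E, ∃ Λ : Finset S, IsTimeBox Λ ∧ MeasurableSet[F E (floorB Λ)] A ∧
      ∀ ω ξ : S → E, ENNReal.ofReal c' * γ Λ ξ A ≤ γ Λ ω A := by
    intro A hA
    obtain ⟨Λ, h1, h2, h3⟩ := hyp A hA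
    refine ⟨Λ, h1, h2, fun ω ξ => le_trans ?_ (h3 ω ξ)⟩
    exact mul_le_mul_left (ENNReal.ofReal_le_ofReal (min_le_left _ _)) _
  have main : ∀ μ' ν' : Measure (S → E), IsPOC E γ μ' → IsPOC E γ ν' → ν' ≤ μ' := by
    intro μ' ν' hμ' hν'
    haveI := hμ'.1
    haveI := hν'.1
    set tseq : ℕ → ℝ := fun n => 1 - (1 - c') ^ n with htseq
    have hseq : ∀ n : ℕ, 0 ≤ tseq n ∧ tseq n < 1 ∧ ENNReal.ofReal (tseq n) • ν' ≤ μ' := by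
      intro n
      induction n with
      | zero =>
        refine ⟨by simp [htseq], by simp [htseq], ?_⟩
        have : tseq 0 = 0 := by simp [htseq]
        rw [this]
        simp [Measure.le_iff']
      | succ n ih =>
        obtain ⟨ih0, ih1, ihP⟩ := ih
        have heq : tseq (n + 1) = tseq n + c' * (1 - tseq n) := by
          simp only [htseq]
          ring
        refine ⟨?_, ?_, ?_⟩
        · rw [heq]; nlinarith
        · rw [heq]; nlinarith
        · rw [heq]
          exact step_up γ hγ hc'0 hyp' ih0 ih1 hμ' hν' ihP
    rw [Measure.le_iff]
    intro s hs
    have hlim : Tendsto (fun n => tseq n * (ν' s).toReal) atTop (𝓝 ((ν' s).toReal)) := by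
      have h0 : Tendsto (fun n : ℕ => (1 - c') ^ n) atTop (𝓝 0) :=
        tendsto_pow_atTop_nhds_zero_of_lt_one (by linarith) (by linarith)
      have h1 : Tendsto tseq atTop (𝓝 1) := by
        have h2 : Tendsto (fun n : ℕ => 1 - (1 - c') ^ n) atTop (𝓝 (1 - 0)) :=
          (tendsto_const_nhds (x := (1 : ℝ))).sub h0
        simpa [htseq] using h2
      have := h1.mul (tendsto_const_nhds (x := (ν' s).toReal))
      simpa using this
    have hn : ∀ n : ℕ, tseq n * (ν' s).toReal ≤ (μ' s).toReal := by
      intro n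
      obtain ⟨h0, _, hle⟩ := hseq n
      have h2 := Measure.le_iff'.mp hle s
      have h3 := ENNReal.toReal_mono (measure_ne_top μ' s) h2
      rwa [Measure.smul_apply, smul_eq_mul, ENNReal.toReal_mul,
        ENNReal.toReal_ofReal h0] at h3
    have := le_of_tendsto' hlim hn
    exact (ENNReal.toReal_le_toReal (measure_ne_top _ _) (measure_ne_top _ _)).mp this
  exact le_antisymm (main ν μ hν hμ) (main μ ν hμ hν)

end POCpaper
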